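/- Let μ > 0, u = −log(μ_min) + 1 where 0 < μ_min ≤ μ ≤ 1, and consider G(w) = (μ − w) + μ + max(u + log w, 0)·μ for w ∈ (0, 1]. Then G attains its maximum over (0,1] ∪ {0} (with G(0) = 2μ) at w = μ, where G(μ) = (u + log μ + 1)·μ ≥ 2μ. -/
import Mathlib


/-- for `G(w) = (μ − w) + μ + max(u + log w, 0)·μ` with
`u = −log μ_min + 1`, the maximum over `(0,1] ∪ {0}` (with `G 0 = 2μ`)
is attained at `w = μ`, where `G μ = (u + log μ + 1)·μ ≥ 2μ`. -/
theorem stmt_10 (μ μmin : ℝ) (hμmin : 0 < μmin) (hle : μmin ≤ μ) (hμ1 : μ ≤ 1)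
    (u : ℝ) (hu : u = -Real.log μmin + 1)
    (G : ℝ → ℝ)
    (hG : ∀ w ∈ Set.Ioc (0 : ℝ) 1, G w = (μ - w) + μ + max (u + Real.log w) 0 * μ)
    (hG0 : G 0 = 2 * μ) :
    G μ = (u + Real.log μ + 1) * μ ∧
    G μ ≥ 2 * μ ∧
    (∀ w ∈ Set.Ioc (0 : ℝ) 1, G w ≤ G μ) ∧ G 0 ≤ G μ := by
  have hμ : (0 : ℝ) < μ := lt_of_lt_of_le hμmin hle
  have hlog : Real.log μmin ≤ Real.log μ := Real.log_le_log hμmin hle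
  have hkey : 1 ≤ u + Real.log μ := by rw [hu]; linarith
  have hmaxμ : max (u + Real.log μ) 0 = u + Real.log μ :=
    max_eq_left (by linarith)
  have hGμ : G μ = (u + Real.log μ + 1) * μ := by
    rw [hG μ ⟨hμ, hμ1⟩, hmaxμ]; ring
  have hge : G μ ≥ 2 * μ := by
    rw [hGμ]
    nlinarith
  refine ⟨hGμ, hge, ?_, by rw [hG0]; exact hge⟩
  intro w hw
  rw [hG w hw, hGμ]
  rcases le_or_gt (u + Real.log w) 0 with h | h
  · rw [max_eq_right h]
    nlinarith [hw.1]
  · rw [max_eq_left h.le]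
    have hsub : Real.log w - Real.log μ ≤ w / μ - 1 := by
      have := Real.log_le_sub_one_of_pos (div_pos hw.1 hμ)
      rwa [Real.log_div (ne_of_gt hw.1) (ne_of_gt hμ)] at this
    have h1 := mul_le_mul_of_nonneg_left hsub hμ.le
    have h2 : μ * (w / μ - 1) = w - μ := by field_simp
    nlinarith
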